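/- arXiv:0809.1218 — 2 statements merged into one kernel-verified Lean document; each statement's English description precedes it below -/
import Mathlib

section
/- Let U ⊆ ℝ³ be open and let u, v : ℝ³ → ℝ be smooth with v_x > 0 on U. Define on U: F := −(v_x⁻¹ + u_x + (½·u_x² + u_y)·v_x), G := log v_x − u_x·v_x, R := v_t − F, S := v_y − G, and E := u_tx + (−½·u_x² + u_y)·u_xx − 2·u_x·u_xy − u_yy. Then the identity ∂_y R − ∂_t S + (v_x⁻² − ½·u_x² − u_y)·∂_x S − (v_x⁻¹ − u_x)·∂_x R = −v_x·E holds at every point of U. -/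
/-- Partial derivative with respect to the first coordinate `t` of `(t,x,y) : ℝ × ℝ × ℝ`. -/
noncomputable def pd_t (f : ℝ × ℝ × ℝ → ℝ) (p : ℝ × ℝ × ℝ) : ℝ :=
  deriv (fun s => f (s, p.2.1, p.2.2)) p.1

/-- Partial derivative with respect to the second coordinate `x`. -/
noncomputable def pd_x (f : ℝ × ℝ × ℝ → ℝ) (p : ℝ × ℝ × ℝ) : ℝ :=
  deriv (fun s => f (p.1, s, p.2.2)) p.2.1

/-- Partial derivative with respect to the third coordinate `y`. -/
noncomputable def pd_y (f : ℝ × ℝ × ℝ → ℝ) (p : ℝ × ℝ × ℝ) : ℝ :=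
  deriv (fun s => f (p.1, p.2.1, s)) p.2.2


def et : ℝ × ℝ × ℝ := (1, 0, 0)
def ex : ℝ × ℝ × ℝ := (0, 1, 0)
def ey : ℝ × ℝ × ℝ := (0, 0, 1)

lemma slice_t (g : ℝ × ℝ × ℝ → ℝ) {a b c : ℝ} (hg : DifferentiableAt ℝ g (a, b, c)) :
    HasDerivAt (fun s => g (s, b, c)) (fderiv ℝ g (a, b, c) et) a := by
  have hline : HasDerivAt (fun s : ℝ => ((s, b, c) : ℝ × ℝ × ℝ)) et a :=
    (hasDerivAt_id a).prodMk ((hasDerivAt_const a b).prodMk (hasDerivAt_const a c))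
  exact hg.hasFDerivAt.comp_hasDerivAt a hline

lemma slice_x (g : ℝ × ℝ × ℝ → ℝ) {a b c : ℝ} (hg : DifferentiableAt ℝ g (a, b, c)) :
    HasDerivAt (fun s => g (a, s, c)) (fderiv ℝ g (a, b, c) ex) b := by
  have hline : HasDerivAt (fun s : ℝ => ((a, s, c) : ℝ × ℝ × ℝ)) ex b :=
    (hasDerivAt_const b a).prodMk ((hasDerivAt_id b).prodMk (hasDerivAt_const b c))
  exact hg.hasFDerivAt.comp_hasDerivAt b hline

lemma slice_y (g : ℝ × ℝ × ℝ → ℝ) {a b c : ℝ} (hg : DifferentiableAt ℝ g (a, b, c)) :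
    HasDerivAt (fun s => g (a, b, s)) (fderiv ℝ g (a, b, c) ey) c := by
  have hline : HasDerivAt (fun s : ℝ => ((a, b, s) : ℝ × ℝ × ℝ)) ey c :=
    (hasDerivAt_const c a).prodMk ((hasDerivAt_const c b).prodMk (hasDerivAt_id c))
  exact hg.hasFDerivAt.comp_hasDerivAt c hline

lemma pd_t_eq (g : ℝ × ℝ × ℝ → ℝ) {p : ℝ × ℝ × ℝ} (hg : DifferentiableAt ℝ g p) :
    pd_t g p = fderiv ℝ g p et := by
  obtain ⟨a, b, c⟩ := p; exact (slice_t g hg).deriv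

lemma pd_x_eq (g : ℝ × ℝ × ℝ → ℝ) {p : ℝ × ℝ × ℝ} (hg : DifferentiableAt ℝ g p) :
    pd_x g p = fderiv ℝ g p ex := by
  obtain ⟨a, b, c⟩ := p; exact (slice_x g hg).deriv

lemma pd_y_eq (g : ℝ × ℝ × ℝ → ℝ) {p : ℝ × ℝ × ℝ} (hg : DifferentiableAt ℝ g p) :
    pd_y g p = fderiv ℝ g p ey := by
  obtain ⟨a, b, c⟩ := p; exact (slice_y g hg).deriv

lemma smooth_dir {f : ℝ × ℝ × ℝ → ℝ} (hf : ContDiff ℝ (⊤ : ℕ∞) f) (w : ℝ × ℝ × ℝ) :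
    ContDiff ℝ (⊤ : ℕ∞) (fun q => fderiv ℝ f q w) :=
  (hf.fderiv_right (by simp)).clm_apply contDiff_const

lemma clairaut {f : ℝ × ℝ × ℝ → ℝ} (hf : ContDiff ℝ (⊤ : ℕ∞) f) (p w w' : ℝ × ℝ × ℝ) :
    fderiv ℝ (fun q => fderiv ℝ f q w) p w' = fderiv ℝ (fun q => fderiv ℝ f q w') p w := by
  have hd : Differentiable ℝ (fderiv ℝ f) := (hf.fderiv_right (m := (⊤ : ℕ∞)) (by simp)).differentiable (by simp)
  have h1 : ∀ q, HasFDerivAt f (fderiv ℝ f q) q := fun q => (hf.differentiable (by simp) q).hasFDerivAt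
  have h2 : HasFDerivAt (fderiv ℝ f) (fderiv ℝ (fderiv ℝ f) p) p := (hd p).hasFDerivAt
  have hsymm := second_derivative_symmetric h1 h2 w w'
  rw [show (fun q => fderiv ℝ f q w) = fun q => (fderiv ℝ f q) ((fun _ => w) q) from rfl]
  rw [show (fun q => fderiv ℝ f q w') = fun q => (fderiv ℝ f q) ((fun _ => w') q) from rfl]
  rw [fderiv_clm_apply (hd p) (differentiableAt_const w),
      fderiv_clm_apply (hd p) (differentiableAt_const w')]
  simp [hsymm]

/-- compatibility identity for the covering (40) (case κ = −2). -/
theorem covering_WE3_identity (U : Set (ℝ × ℝ × ℝ)) (hU : IsOpen U)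
    (u v : ℝ × ℝ × ℝ → ℝ) (hu : ContDiff ℝ (⊤ : ℕ∞) u) (hv : ContDiff ℝ (⊤ : ℕ∞) v)
    (hvx : ∀ q ∈ U, 0 < pd_x v q) :
    let F : ℝ × ℝ × ℝ → ℝ := fun q =>
      -((pd_x v q)⁻¹ + pd_x u q + ((1 / 2) * (pd_x u q) ^ 2 + pd_y u q) * pd_x v q)
    let G : ℝ × ℝ × ℝ → ℝ := fun q => Real.log (pd_x v q) - pd_x u q * pd_x v q
    let R : ℝ × ℝ × ℝ → ℝ := fun q => pd_t v q - F q
    let S : ℝ × ℝ × ℝ → ℝ := fun q => pd_y v q - G q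
    let E : ℝ × ℝ × ℝ → ℝ := fun q =>
      pd_t (pd_x u) q
      + (-(1 / 2) * (pd_x u q) ^ 2 + pd_y u q) * pd_x (pd_x u) q
      - 2 * pd_x u q * pd_y (pd_x u) q - pd_y (pd_y u) q
    ∀ p ∈ U,
      pd_y R p - pd_t S p
      + (((pd_x v p) ^ 2)⁻¹ - (1 / 2) * (pd_x u p) ^ 2 - pd_y u p) * pd_x S p
      - ((pd_x v p)⁻¹ - pd_x u p) * pd_x R p
      = -(pd_x v p) * E p := by
  intro F G R S E p hp
  obtain ⟨t0, x0, y0⟩ := p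
  have hud : Differentiable ℝ u := hu.differentiable (by simp)
  have hvd : Differentiable ℝ v := hv.differentiable (by simp)
  have huxd : Differentiable ℝ (fun q => fderiv ℝ u q ex) := (smooth_dir hu ex).differentiable (by simp)
  have huyd : Differentiable ℝ (fun q => fderiv ℝ u q ey) := (smooth_dir hu ey).differentiable (by simp)
  have hvtd : Differentiable ℝ (fun q => fderiv ℝ v q et) := (smooth_dir hv et).differentiable (by simp)
  have hvxd : Differentiable ℝ (fun q => fderiv ℝ v q ex) := (smooth_dir hv ex).differentiable (by simp)
  have hvyd : Differentiable ℝ (fun q => fderiv ℝ v q ey) := (smooth_dir hv ey).differentiable (by simp)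
  have eq1 : pd_t v = fun q => fderiv ℝ v q et := funext fun q => pd_t_eq v (hvd q)
  have eq2 : pd_x v = fun q => fderiv ℝ v q ex := funext fun q => pd_x_eq v (hvd q)
  have eq3 : pd_y v = fun q => fderiv ℝ v q ey := funext fun q => pd_y_eq v (hvd q)
  have eq4 : pd_x u = fun q => fderiv ℝ u q ex := funext fun q => pd_x_eq u (hud q)
  have eq5 : pd_y u = fun q => fderiv ℝ u q ey := funext fun q => pd_y_eq u (hud q)
  have hA : fderiv ℝ v (t0, x0, y0) ex ≠ 0 := by
    have := hvx _ hp
    rw [pd_x_eq v (hvd _)] at this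
    exact ne_of_gt this
  simp only [R, S, F, G, E, eq1, eq2, eq3, eq4, eq5]
  have hRy : pd_y (fun q => (fderiv ℝ v q) et -
        -(((fderiv ℝ v q) ex)⁻¹ + (fderiv ℝ u q) ex +
            (1 / 2 * (fderiv ℝ u q) ex ^ 2 + (fderiv ℝ u q) ey) * (fderiv ℝ v q) ex)) (t0, x0, y0)
      = fderiv ℝ (fun q => fderiv ℝ v q et) (t0, x0, y0) ey
        - fderiv ℝ (fun q => fderiv ℝ v q ex) (t0, x0, y0) ey / (fderiv ℝ v (t0, x0, y0) ex) ^ 2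
        + fderiv ℝ (fun q => fderiv ℝ u q ex) (t0, x0, y0) ey
        + (fderiv ℝ u (t0, x0, y0) ex * fderiv ℝ (fun q => fderiv ℝ u q ex) (t0, x0, y0) ey
            + fderiv ℝ (fun q => fderiv ℝ u q ey) (t0, x0, y0) ey) * fderiv ℝ v (t0, x0, y0) ex
        + (1 / 2 * (fderiv ℝ u (t0, x0, y0) ex) ^ 2 + fderiv ℝ u (t0, x0, y0) ey)
            * fderiv ℝ (fun q => fderiv ℝ v q ex) (t0, x0, y0) ey := by
    have h := HasDerivAt.sub (slice_y (fun q => (fderiv ℝ v q) et) (hvtd (t0,x0,y0)))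
      (HasDerivAt.neg (HasDerivAt.add (HasDerivAt.add
        ((slice_y (fun q => (fderiv ℝ v q) ex) (hvxd (t0,x0,y0))).inv hA)
        (slice_y (fun q => (fderiv ℝ u q) ex) (huxd (t0,x0,y0))))
        (HasDerivAt.mul (HasDerivAt.add
          (HasDerivAt.const_mul (1/2 : ℝ) ((slice_y (fun q => (fderiv ℝ u q) ex) (huxd (t0,x0,y0))).pow 2))
          (slice_y (fun q => (fderiv ℝ u q) ey) (huyd (t0,x0,y0))))
          (slice_y (fun q => (fderiv ℝ v q) ex) (hvxd (t0,x0,y0))))))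
    refine HasDerivAt.deriv ?_
    convert h using 1
    · rfl
    beta_reduce
    simp only [Pi.add_apply, Pi.pow_apply]
    push_cast
    ring
  have hSt : pd_t (fun q => (fderiv ℝ v q) ey -
        (Real.log ((fderiv ℝ v q) ex) - (fderiv ℝ u q) ex * (fderiv ℝ v q) ex)) (t0, x0, y0)
      = fderiv ℝ (fun q => fderiv ℝ v q et) (t0, x0, y0) ey
        - (fderiv ℝ (fun q => fderiv ℝ v q ex) (t0, x0, y0) et / fderiv ℝ v (t0, x0, y0) ex
           - (fderiv ℝ (fun q => fderiv ℝ u q ex) (t0, x0, y0) et * fderiv ℝ v (t0, x0, y0) ex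
              + fderiv ℝ u (t0, x0, y0) ex * fderiv ℝ (fun q => fderiv ℝ v q ex) (t0, x0, y0) et)) := by
    have h := HasDerivAt.sub (slice_t (fun q => (fderiv ℝ v q) ey) (hvyd (t0,x0,y0)))
      (HasDerivAt.sub ((slice_t (fun q => (fderiv ℝ v q) ex) (hvxd (t0,x0,y0))).log hA)
        (HasDerivAt.mul (slice_t (fun q => (fderiv ℝ u q) ex) (huxd (t0,x0,y0)))
          (slice_t (fun q => (fderiv ℝ v q) ex) (hvxd (t0,x0,y0)))))
    refine HasDerivAt.deriv ?_
    convert h using 1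
    · rfl
    rw [clairaut hv (t0,x0,y0) et ey]
  have hSx : pd_x (fun q => (fderiv ℝ v q) ey -
        (Real.log ((fderiv ℝ v q) ex) - (fderiv ℝ u q) ex * (fderiv ℝ v q) ex)) (t0, x0, y0)
      = fderiv ℝ (fun q => fderiv ℝ v q ex) (t0, x0, y0) ey
        - (fderiv ℝ (fun q => fderiv ℝ v q ex) (t0, x0, y0) ex / fderiv ℝ v (t0, x0, y0) ex
           - (fderiv ℝ (fun q => fderiv ℝ u q ex) (t0, x0, y0) ex * fderiv ℝ v (t0, x0, y0) ex
              + fderiv ℝ u (t0, x0, y0) ex * fderiv ℝ (fun q => fderiv ℝ v q ex) (t0, x0, y0) ex)) := by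
    have h := HasDerivAt.sub (slice_x (fun q => (fderiv ℝ v q) ey) (hvyd (t0,x0,y0)))
      (HasDerivAt.sub ((slice_x (fun q => (fderiv ℝ v q) ex) (hvxd (t0,x0,y0))).log hA)
        (HasDerivAt.mul (slice_x (fun q => (fderiv ℝ u q) ex) (huxd (t0,x0,y0)))
          (slice_x (fun q => (fderiv ℝ v q) ex) (hvxd (t0,x0,y0)))))
    refine HasDerivAt.deriv ?_
    convert h using 1
    · rfl
    rw [clairaut hv (t0,x0,y0) ex ey]
  have hRx : pd_x (fun q => (fderiv ℝ v q) et -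
        -(((fderiv ℝ v q) ex)⁻¹ + (fderiv ℝ u q) ex +
            (1 / 2 * (fderiv ℝ u q) ex ^ 2 + (fderiv ℝ u q) ey) * (fderiv ℝ v q) ex)) (t0, x0, y0)
      = fderiv ℝ (fun q => fderiv ℝ v q ex) (t0, x0, y0) et
        - fderiv ℝ (fun q => fderiv ℝ v q ex) (t0, x0, y0) ex / (fderiv ℝ v (t0, x0, y0) ex) ^ 2
        + fderiv ℝ (fun q => fderiv ℝ u q ex) (t0, x0, y0) ex
        + (fderiv ℝ u (t0, x0, y0) ex * fderiv ℝ (fun q => fderiv ℝ u q ex) (t0, x0, y0) ex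
            + fderiv ℝ (fun q => fderiv ℝ u q ex) (t0, x0, y0) ey) * fderiv ℝ v (t0, x0, y0) ex
        + (1 / 2 * (fderiv ℝ u (t0, x0, y0) ex) ^ 2 + fderiv ℝ u (t0, x0, y0) ey)
            * fderiv ℝ (fun q => fderiv ℝ v q ex) (t0, x0, y0) ex := by
    have h := HasDerivAt.sub (slice_x (fun q => (fderiv ℝ v q) et) (hvtd (t0,x0,y0)))
      (HasDerivAt.neg (HasDerivAt.add (HasDerivAt.add
        ((slice_x (fun q => (fderiv ℝ v q) ex) (hvxd (t0,x0,y0))).inv hA)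
        (slice_x (fun q => (fderiv ℝ u q) ex) (huxd (t0,x0,y0))))
        (HasDerivAt.mul (HasDerivAt.add
          (HasDerivAt.const_mul (1/2 : ℝ) ((slice_x (fun q => (fderiv ℝ u q) ex) (huxd (t0,x0,y0))).pow 2))
          (slice_x (fun q => (fderiv ℝ u q) ey) (huyd (t0,x0,y0))))
          (slice_x (fun q => (fderiv ℝ v q) ex) (hvxd (t0,x0,y0))))))
    refine HasDerivAt.deriv ?_
    convert h using 1
    · rfl
    rw [clairaut hv (t0,x0,y0) et ex, clairaut hu (t0,x0,y0) ey ex]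
    beta_reduce
    simp only [Pi.add_apply, Pi.pow_apply]
    push_cast
    ring
  have hE1 : pd_t (fun q => (fderiv ℝ u q) ex) (t0, x0, y0)
      = fderiv ℝ (fun q => fderiv ℝ u q ex) (t0, x0, y0) et := pd_t_eq _ (huxd (t0,x0,y0))
  have hE2 : pd_x (fun q => (fderiv ℝ u q) ex) (t0, x0, y0)
      = fderiv ℝ (fun q => fderiv ℝ u q ex) (t0, x0, y0) ex := pd_x_eq _ (huxd (t0,x0,y0))
  have hE3 : pd_y (fun q => (fderiv ℝ u q) ex) (t0, x0, y0)
      = fderiv ℝ (fun q => fderiv ℝ u q ex) (t0, x0, y0) ey := pd_y_eq _ (huxd (t0,x0,y0))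
  have hE4 : pd_y (fun q => (fderiv ℝ u q) ey) (t0, x0, y0)
      = fderiv ℝ (fun q => fderiv ℝ u q ey) (t0, x0, y0) ey := pd_y_eq _ (huyd (t0,x0,y0))
  rw [hRy, hSt, hSx, hRx, hE1, hE2, hE3, hE4]
  field_simp
  ring
end

section
/- Let U ⊆ ℝ³ be open and let u, v : ℝ³ → ℝ be smooth with v_x > 0 on U. Suppose that on U the covering equations v_t = −((¼·u_x² + u_y)·v_x + u_x·√(v_x) − log v_x) and v_y = 2·√(v_x) − u_x·v_x hold. Then u satisfies equation (mdKP_κ) with κ = −3/2, namely u_yy = u_tx + (−¼·u_x² + u_y)·u_xx − (3/2)·u_x·u_xy, at every point of U. -/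
section Aux

lemma lineT (x y t : ℝ) :
    HasDerivAt (fun s : ℝ => ((s, x, y) : ℝ × ℝ × ℝ)) (1, 0, 0) t :=
  (hasDerivAt_id t).prodMk (hasDerivAt_const t (x, y))

lemma lineX (t y x : ℝ) :
    HasDerivAt (fun s : ℝ => ((t, s, y) : ℝ × ℝ × ℝ)) (0, 1, 0) x :=
  (hasDerivAt_const x t).prodMk ((hasDerivAt_id x).prodMk (hasDerivAt_const x y))

lemma lineY (t x y : ℝ) :
    HasDerivAt (fun s : ℝ => ((t, x, s) : ℝ × ℝ × ℝ)) (0, 0, 1) y :=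
  (hasDerivAt_const y t).prodMk ((hasDerivAt_const y x).prodMk (hasDerivAt_id y))

lemma pd_t_eq_s9 (f : ℝ × ℝ × ℝ → ℝ) {q : ℝ × ℝ × ℝ} (hf : DifferentiableAt ℝ f q) :
    pd_t f q = fderiv ℝ f q (1, 0, 0) :=
  (hf.hasFDerivAt.comp_hasDerivAt q.1 (lineT q.2.1 q.2.2 q.1)).deriv

lemma pd_x_eq_s9 (f : ℝ × ℝ × ℝ → ℝ) {q : ℝ × ℝ × ℝ} (hf : DifferentiableAt ℝ f q) :
    pd_x f q = fderiv ℝ f q (0, 1, 0) :=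
  (hf.hasFDerivAt.comp_hasDerivAt q.2.1 (lineX q.1 q.2.2 q.2.1)).deriv

lemma pd_y_eq_s9 (f : ℝ × ℝ × ℝ → ℝ) {q : ℝ × ℝ × ℝ} (hf : DifferentiableAt ℝ f q) :
    pd_y f q = fderiv ℝ f q (0, 0, 1) :=
  (hf.hasFDerivAt.comp_hasDerivAt q.2.2 (lineY q.1 q.2.1 q.2.2)).deriv

lemma contDiff_dir (c : ℝ × ℝ × ℝ) {f : ℝ × ℝ × ℝ → ℝ} (hf : ContDiff ℝ (⊤ : ℕ∞) f) :
    ContDiff ℝ (⊤ : ℕ∞) (fun q => fderiv ℝ f q c) :=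
  (ContinuousLinearMap.apply ℝ ℝ c).contDiff.comp (hf.fderiv_right (by simp))

lemma pd_t_eq' {f : ℝ × ℝ × ℝ → ℝ} (hf : ContDiff ℝ (⊤ : ℕ∞) f) :
    pd_t f = fun q => fderiv ℝ f q (1, 0, 0) :=
  funext fun q => pd_t_eq_s9 f (hf.differentiable (by simp) q)

lemma pd_x_eq' {f : ℝ × ℝ × ℝ → ℝ} (hf : ContDiff ℝ (⊤ : ℕ∞) f) :
    pd_x f = fun q => fderiv ℝ f q (0, 1, 0) :=
  funext fun q => pd_x_eq_s9 f (hf.differentiable (by simp) q)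

lemma pd_y_eq' {f : ℝ × ℝ × ℝ → ℝ} (hf : ContDiff ℝ (⊤ : ℕ∞) f) :
    pd_y f = fun q => fderiv ℝ f q (0, 0, 1) :=
  funext fun q => pd_y_eq_s9 f (hf.differentiable (by simp) q)

lemma contDiff_pd_t {f : ℝ × ℝ × ℝ → ℝ} (hf : ContDiff ℝ (⊤ : ℕ∞) f) : ContDiff ℝ (⊤ : ℕ∞) (pd_t f) := by
  rw [pd_t_eq' hf]; exact contDiff_dir _ hf

lemma contDiff_pd_x {f : ℝ × ℝ × ℝ → ℝ} (hf : ContDiff ℝ (⊤ : ℕ∞) f) : ContDiff ℝ (⊤ : ℕ∞) (pd_x f) := by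
  rw [pd_x_eq' hf]; exact contDiff_dir _ hf

lemma contDiff_pd_y {f : ℝ × ℝ × ℝ → ℝ} (hf : ContDiff ℝ (⊤ : ℕ∞) f) : ContDiff ℝ (⊤ : ℕ∞) (pd_y f) := by
  rw [pd_y_eq' hf]; exact contDiff_dir _ hf

lemma fderiv_swap {f : ℝ × ℝ × ℝ → ℝ} (hf : ContDiff ℝ (⊤ : ℕ∞) f) (q c d : ℝ × ℝ × ℝ) :
    fderiv ℝ (fun r => fderiv ℝ f r c) q d = fderiv ℝ (fun r => fderiv ℝ f r d) q c := by
  have hdf : Differentiable ℝ (fderiv ℝ f) := (hf.fderiv_right (m := (⊤ : ℕ∞)) (by simp)).differentiable (by simp)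
  have hcomp : ∀ e : ℝ × ℝ × ℝ, HasFDerivAt (fun r => fderiv ℝ f r e)
      ((ContinuousLinearMap.apply ℝ ℝ e).comp (fderiv ℝ (fderiv ℝ f) q)) q :=
    fun e => (ContinuousLinearMap.apply ℝ ℝ e).hasFDerivAt.comp q (hdf q).hasFDerivAt
  rw [(hcomp c).fderiv, (hcomp d).fderiv]
  simp only [ContinuousLinearMap.coe_comp', Function.comp_apply,
    ContinuousLinearMap.apply_apply]
  exact (second_derivative_symmetric (fun y => (hf.differentiable (by simp) y).hasFDerivAt)
    (hdf q).hasFDerivAt d c)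

end Aux

section Aux2

lemma pd_swap_ty {f : ℝ × ℝ × ℝ → ℝ} (hf : ContDiff ℝ (⊤ : ℕ∞) f) (q : ℝ × ℝ × ℝ) :
    pd_y (pd_t f) q = pd_t (pd_y f) q := by
  rw [pd_y_eq_s9 _ ((contDiff_pd_t hf).differentiable (by simp) q),
    pd_t_eq_s9 _ ((contDiff_pd_y hf).differentiable (by simp) q), pd_t_eq' hf, pd_y_eq' hf]
  exact (fderiv_swap hf q _ _).symm

lemma pd_swap_tx {f : ℝ × ℝ × ℝ → ℝ} (hf : ContDiff ℝ (⊤ : ℕ∞) f) (q : ℝ × ℝ × ℝ) :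
    pd_t (pd_x f) q = pd_x (pd_t f) q := by
  rw [pd_x_eq_s9 _ ((contDiff_pd_t hf).differentiable (by simp) q),
    pd_t_eq_s9 _ ((contDiff_pd_x hf).differentiable (by simp) q), pd_t_eq' hf, pd_x_eq' hf]
  exact (fderiv_swap hf q _ _).symm

lemma pd_swap_yx {f : ℝ × ℝ × ℝ → ℝ} (hf : ContDiff ℝ (⊤ : ℕ∞) f) (q : ℝ × ℝ × ℝ) :
    pd_y (pd_x f) q = pd_x (pd_y f) q := by
  rw [pd_x_eq_s9 _ ((contDiff_pd_y hf).differentiable (by simp) q),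
    pd_y_eq_s9 _ ((contDiff_pd_x hf).differentiable (by simp) q), pd_y_eq' hf, pd_x_eq' hf]
  exact (fderiv_swap hf q _ _).symm

lemma hasDerivAt_line_t {g : ℝ × ℝ × ℝ → ℝ} (hg : ContDiff ℝ (⊤ : ℕ∞) g) (t x y : ℝ) :
    HasDerivAt (fun s => g (s, x, y)) (pd_t g (t, x, y)) t := by
  have h := (hg.differentiable (by simp) (t, x, y)).hasFDerivAt.comp_hasDerivAt t (lineT x y t)
  rw [pd_t_eq_s9 g (hg.differentiable (by simp) (t, x, y))]
  exact h

lemma hasDerivAt_line_x {g : ℝ × ℝ × ℝ → ℝ} (hg : ContDiff ℝ (⊤ : ℕ∞) g) (t x y : ℝ) :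
    HasDerivAt (fun s => g (t, s, y)) (pd_x g (t, x, y)) x := by
  have h := (hg.differentiable (by simp) (t, x, y)).hasFDerivAt.comp_hasDerivAt x (lineX t y x)
  rw [pd_x_eq_s9 g (hg.differentiable (by simp) (t, x, y))]
  exact h

lemma hasDerivAt_line_y {g : ℝ × ℝ × ℝ → ℝ} (hg : ContDiff ℝ (⊤ : ℕ∞) g) (t x y : ℝ) :
    HasDerivAt (fun s => g (t, x, s)) (pd_y g (t, x, y)) y := by
  have h := (hg.differentiable (by simp) (t, x, y)).hasFDerivAt.comp_hasDerivAt y (lineY t x y)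
  rw [pd_y_eq_s9 g (hg.differentiable (by simp) (t, x, y))]
  exact h

lemma hasDerivAt_RHSt {A B W : ℝ → ℝ} {a' b' w' s0 : ℝ}
    (hA : HasDerivAt A a' s0) (hB : HasDerivAt B b' s0) (hW : HasDerivAt W w' s0)
    (hW0 : W s0 ≠ 0) :
    HasDerivAt
      (fun s => -((1 / 4 * A s ^ 2 + B s) * W s + A s * Real.sqrt (W s) - Real.log (W s)))
      (-((a' * A s0 / 2 + b') * W s0 + (1 / 4 * A s0 ^ 2 + B s0) * w'
        + a' * Real.sqrt (W s0) + A s0 * w' / (2 * Real.sqrt (W s0)) - w' / W s0)) s0 := by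
  have h := (((((hA.pow 2).const_mul (1/4 : ℝ)).add hB).mul hW).add
      (hA.mul (hW.sqrt hW0))).sub (hW.log hW0)
  have h2 := h.neg
  refine HasDerivAt.congr_deriv h2 ?_
  push_cast
  simp only [Pi.add_apply, Pi.pow_apply]
  ring

lemma hasDerivAt_RHSy {A W : ℝ → ℝ} {a' w' s0 : ℝ}
    (hA : HasDerivAt A a' s0) (hW : HasDerivAt W w' s0) (hW0 : W s0 ≠ 0) :
    HasDerivAt (fun s => 2 * Real.sqrt (W s) - A s * W s)
      (w' / Real.sqrt (W s0) - (a' * W s0 + A s0 * w')) s0 := by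
  have h := ((hW.sqrt hW0).const_mul (2 : ℝ)).sub (hA.mul hW)
  refine HasDerivAt.congr_deriv h ?_
  rw [mul_comm (2:ℝ) (Real.sqrt (W s0))]
  rw [div_mul_eq_div_div]
  ring

lemma final_algebra (a b w sq ax ay aT bY wx wy wt vty vyt : ℝ)
    (hs : 0 < sq) (hw : sq ^ 2 = w)
    (h1 : wy = wx / sq - (ax * w + a * wx))
    (h2 : wt = -((ax * a / 2 + ay) * w + (1 / 4 * a ^ 2 + b) * wx
        + ax * sq + a * wx / (2 * sq) - wx / w))
    (h3 : vyt = wt / sq - (aT * w + a * wt))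
    (h4 : vty = -((ay * a / 2 + bY) * w + (1 / 4 * a ^ 2 + b) * wy
        + ay * sq + a * wy / (2 * sq) - wy / w))
    (h5 : vty = vyt) :
    bY = aT + (-(1 / 4) * a ^ 2 + b) * ax - 3 / 2 * a * ay := by
  subst hw
  have hs' : sq ≠ 0 := hs.ne'
  have h1c : sq * wy = wx - ax * sq ^ 3 - a * wx * sq := by
    rw [h1]; field_simp; ring
  have h2c : 2 * sq ^ 2 * wt = -((a * ax + 2 * ay) * sq ^ 4
      + (a ^ 2 / 2 + 2 * b) * wx * sq ^ 2 + 2 * ax * sq ^ 3 + a * wx * sq - 2 * wx) := by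
    rw [h2]; field_simp; ring
  have h3c : sq * vyt = wt - aT * sq ^ 3 - a * wt * sq := by
    rw [h3]; field_simp; ring
  have h4c : 2 * sq ^ 2 * vty = -((a * ay + 2 * bY) * sq ^ 4
      + (a ^ 2 / 2 + 2 * b) * wy * sq ^ 2 + 2 * ay * sq ^ 3 + a * wy * sq - 2 * wy) := by
    rw [h4]; field_simp; ring
  have key : (2 * sq ^ 5) * bY
      = (2 * sq ^ 5) * (aT + (-(1 / 4) * a ^ 2 + b) * ax - 3 / 2 * a * ay) := by
    linear_combination (-(2 * sq ^ 3)) * h5 + sq * h4c - 2 * sq ^ 2 * h3c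
      - (1 - a * sq) * h2c - ((a ^ 2 / 2 + 2 * b) * sq ^ 2 + a * sq - 2) * h1c
  exact mul_left_cancel₀ (by positivity) key

end Aux2

/-- the covering (41) (case κ = −3/2) implies the mdKP equation. -/
theorem covering_WE4_implies_mdKP (U : Set (ℝ × ℝ × ℝ)) (hU : IsOpen U)
    (u v : ℝ × ℝ × ℝ → ℝ) (hu : ContDiff ℝ (⊤ : ℕ∞) u) (hv : ContDiff ℝ (⊤ : ℕ∞) v)
    (hvx : ∀ q ∈ U, 0 < pd_x v q)
    (hvt : ∀ q ∈ U, pd_t v q =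
      -(((1 / 4) * (pd_x u q) ^ 2 + pd_y u q) * pd_x v q
        + pd_x u q * Real.sqrt (pd_x v q) - Real.log (pd_x v q)))
    (hvy : ∀ q ∈ U, pd_y v q = 2 * Real.sqrt (pd_x v q) - pd_x u q * pd_x v q) :
    ∀ p ∈ U,
      pd_y (pd_y u) p =
        pd_t (pd_x u) p
        + (-(1 / 4) * (pd_x u p) ^ 2 + pd_y u p) * pd_x (pd_x u) p
        - (3 / 2) * pd_x u p * pd_y (pd_x u) p := by
  intro p hp
  have hw0 : pd_x v p ≠ 0 := (hvx p hp).ne'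
  -- eventual membership along coordinate lines
  have hmemT : ∀ᶠ s in nhds p.1, (s, p.2.1, p.2.2) ∈ U := by
    have hc : Continuous (fun s : ℝ => ((s, p.2.1, p.2.2) : ℝ × ℝ × ℝ)) := by fun_prop
    filter_upwards [(hU.preimage hc).mem_nhds
      (show (p.1, p.2.1, p.2.2) ∈ U from hp)] with s hs using hs
  have hmemX : ∀ᶠ s in nhds p.2.1, (p.1, s, p.2.2) ∈ U := by
    have hc : Continuous (fun s : ℝ => ((p.1, s, p.2.2) : ℝ × ℝ × ℝ)) := by fun_prop
    filter_upwards [(hU.preimage hc).mem_nhds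
      (show (p.1, p.2.1, p.2.2) ∈ U from hp)] with s hs using hs
  have hmemY : ∀ᶠ s in nhds p.2.2, (p.1, p.2.1, s) ∈ U := by
    have hc : Continuous (fun s : ℝ => ((p.1, p.2.1, s) : ℝ × ℝ × ℝ)) := by fun_prop
    filter_upwards [(hU.preimage hc).mem_nhds
      (show (p.1, p.2.1, p.2.2) ∈ U from hp)] with s hs using hs
  -- e1 : x-derivative of the v_y equation
  have hEq1 : (fun s => pd_y v (p.1, s, p.2.2)) =ᶠ[nhds p.2.1] (fun s =>
      2 * Real.sqrt (pd_x v (p.1, s, p.2.2))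
        - pd_x u (p.1, s, p.2.2) * pd_x v (p.1, s, p.2.2)) := by
    filter_upwards [hmemX] with s hs using hvy _ hs
  have e1 := hEq1.deriv_eq.trans
    (hasDerivAt_RHSy (hasDerivAt_line_x (contDiff_pd_x hu) p.1 p.2.1 p.2.2)
      (hasDerivAt_line_x (contDiff_pd_x hv) p.1 p.2.1 p.2.2) hw0).deriv
  -- e2 : t-derivative of the v_y equation
  have hEq2 : (fun s => pd_y v (s, p.2.1, p.2.2)) =ᶠ[nhds p.1] (fun s =>
      2 * Real.sqrt (pd_x v (s, p.2.1, p.2.2))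
        - pd_x u (s, p.2.1, p.2.2) * pd_x v (s, p.2.1, p.2.2)) := by
    filter_upwards [hmemT] with s hs using hvy _ hs
  have e2 := hEq2.deriv_eq.trans
    (hasDerivAt_RHSy (hasDerivAt_line_t (contDiff_pd_x hu) p.1 p.2.1 p.2.2)
      (hasDerivAt_line_t (contDiff_pd_x hv) p.1 p.2.1 p.2.2) hw0).deriv
  -- e3 : x-derivative of the v_t equation
  have hEq3 : (fun s => pd_t v (p.1, s, p.2.2)) =ᶠ[nhds p.2.1] (fun s =>
      -((1 / 4 * pd_x u (p.1, s, p.2.2) ^ 2 + pd_y u (p.1, s, p.2.2)) * pd_x v (p.1, s, p.2.2)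
        + pd_x u (p.1, s, p.2.2) * Real.sqrt (pd_x v (p.1, s, p.2.2))
        - Real.log (pd_x v (p.1, s, p.2.2)))) := by
    filter_upwards [hmemX] with s hs using hvt _ hs
  have e3 := hEq3.deriv_eq.trans
    (hasDerivAt_RHSt (hasDerivAt_line_x (contDiff_pd_x hu) p.1 p.2.1 p.2.2)
      (hasDerivAt_line_x (contDiff_pd_y hu) p.1 p.2.1 p.2.2)
      (hasDerivAt_line_x (contDiff_pd_x hv) p.1 p.2.1 p.2.2) hw0).deriv
  -- e4 : y-derivative of the v_t equation
  have hEq4 : (fun s => pd_t v (p.1, p.2.1, s)) =ᶠ[nhds p.2.2] (fun s =>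
      -((1 / 4 * pd_x u (p.1, p.2.1, s) ^ 2 + pd_y u (p.1, p.2.1, s)) * pd_x v (p.1, p.2.1, s)
        + pd_x u (p.1, p.2.1, s) * Real.sqrt (pd_x v (p.1, p.2.1, s))
        - Real.log (pd_x v (p.1, p.2.1, s)))) := by
    filter_upwards [hmemY] with s hs using hvt _ hs
  have e4 := hEq4.deriv_eq.trans
    (hasDerivAt_RHSt (hasDerivAt_line_y (contDiff_pd_x hu) p.1 p.2.1 p.2.2)
      (hasDerivAt_line_y (contDiff_pd_y hu) p.1 p.2.1 p.2.2)
      (hasDerivAt_line_y (contDiff_pd_x hv) p.1 p.2.1 p.2.2) hw0).deriv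
  -- assemble the hypotheses of the algebra lemma
  have h1 : pd_y (pd_x v) p = pd_x (pd_x v) p / Real.sqrt (pd_x v p)
      - (pd_x (pd_x u) p * pd_x v p + pd_x u p * pd_x (pd_x v) p) :=
    (pd_swap_yx hv p).trans e1
  have e3' : pd_x (pd_t v) p =
      -((pd_x (pd_x u) p * pd_x u p / 2 + pd_y (pd_x u) p) * pd_x v p
        + (1 / 4 * pd_x u p ^ 2 + pd_y u p) * pd_x (pd_x v) p
        + pd_x (pd_x u) p * Real.sqrt (pd_x v p)
        + pd_x u p * pd_x (pd_x v) p / (2 * Real.sqrt (pd_x v p))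
        - pd_x (pd_x v) p / pd_x v p) := by
    have e3'' := e3
    rw [← pd_swap_yx hu p] at e3''
    exact e3''
  have h2 : pd_t (pd_x v) p =
      -((pd_x (pd_x u) p * pd_x u p / 2 + pd_y (pd_x u) p) * pd_x v p
        + (1 / 4 * pd_x u p ^ 2 + pd_y u p) * pd_x (pd_x v) p
        + pd_x (pd_x u) p * Real.sqrt (pd_x v p)
        + pd_x u p * pd_x (pd_x v) p / (2 * Real.sqrt (pd_x v p))
        - pd_x (pd_x v) p / pd_x v p) :=
    (pd_swap_tx hv p).trans e3'
  have h3 : pd_t (pd_y v) p = pd_t (pd_x v) p / Real.sqrt (pd_x v p)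
      - (pd_t (pd_x u) p * pd_x v p + pd_x u p * pd_t (pd_x v) p) := e2
  have h4 : pd_y (pd_t v) p =
      -((pd_y (pd_x u) p * pd_x u p / 2 + pd_y (pd_y u) p) * pd_x v p
        + (1 / 4 * pd_x u p ^ 2 + pd_y u p) * pd_y (pd_x v) p
        + pd_y (pd_x u) p * Real.sqrt (pd_x v p)
        + pd_x u p * pd_y (pd_x v) p / (2 * Real.sqrt (pd_x v p))
        - pd_y (pd_x v) p / pd_x v p) := e4
  have h5 : pd_y (pd_t v) p = pd_t (pd_y v) p := pd_swap_ty hv p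
  exact final_algebra (pd_x u p) (pd_y u p) (pd_x v p) (Real.sqrt (pd_x v p))
    (pd_x (pd_x u) p) (pd_y (pd_x u) p) (pd_t (pd_x u) p) (pd_y (pd_y u) p)
    (pd_x (pd_x v) p) (pd_y (pd_x v) p) (pd_t (pd_x v) p)
    (pd_y (pd_t v) p) (pd_t (pd_y v) p)
    (Real.sqrt_pos.mpr (hvx p hp)) (Real.sq_sqrt (hvx p hp).le) h1 h2 h3 h4 h5
end
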